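/- arXiv:1511.07151 — 2 statements merged into one kernel-verified Lean document; each statement's English description precedes it below -/
import Mathlib

section
/- For each fixed l ∈ ℕ₀, the map k ↦ u(l) + u(k) permutes the set {u(k) : k ∈ ℕ₀}, i.e. {u(l) + u(k) : k ∈ ℕ₀} = {u(k) : k ∈ ℕ₀}. -/
/-!
Adding `u n` and `u m` digit by digit realises the sum as a value of `u`: inside a base-`q`
digit, `u` is `𝔭⁻¹` times a combination of the base-`p` digits with coefficients `ε`, and these
digits may be added modulo `p` because `K` has characteristic `p`; across base-`q` digits, `u` is
the `𝔭`-adic combination of the values of the digits. Hence `Set.range u` contains `0` and is closed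
under addition, and in characteristic `p` also under negation, so it is an additive subgroup of
`K`, which the translation by its element `u l` permutes.
-/

open Finset

namespace Nat

theorem sum_range_mul_pow_lt {b : ℕ} {e : ℕ → ℕ} :
    ∀ {N : ℕ}, (∀ i < N, e i < b) → ∑ i ∈ range N, e i * b ^ i < b ^ N
  | 0, _ => by simp
  | N + 1, he => by
    have hlow : ∑ i ∈ range N, e i * b ^ i < b ^ N :=
      sum_range_mul_pow_lt fun i hi => he i (by omega)
    have htop : e N + 1 ≤ b := he N N.lt_succ_self
    calc ∑ i ∈ range (N + 1), e i * b ^ i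
        < (e N + 1) * b ^ N := by rw [sum_range_succ]; nlinarith
      _ ≤ b ^ (N + 1) := by rw [pow_succ']; exact Nat.mul_le_mul_right _ htop

theorem sum_range_mul_pow_div_pow_mod {b : ℕ} :
    ∀ {N : ℕ} {e : ℕ → ℕ}, (∀ i < N, e i < b) → ∀ {j : ℕ}, j < N →
      (∑ i ∈ range N, e i * b ^ i) / b ^ j % b = e j
  | 0, _, _, _, hj => absurd hj (Nat.not_lt_zero _)
  | N + 1, e, he, j, hj => by
    have hsplit : ∑ i ∈ range (N + 1), e i * b ^ i =
        e 0 + b * ∑ i ∈ range N, e (i + 1) * b ^ i := by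
      rw [sum_range_succ', mul_sum, pow_zero, mul_one, add_comm]
      exact congrArg (e 0 + ·) (sum_congr rfl fun i _ => by ring)
    have he0 : e 0 < b := he 0 (by omega)
    rw [hsplit]
    rcases j with _ | j
    · rw [pow_zero, Nat.div_one, Nat.add_mul_mod_self_left, Nat.mod_eq_of_lt he0]
    · rw [pow_succ', ← Nat.div_div_eq_div_mul, Nat.add_mul_div_left _ _ (by omega),
        Nat.div_eq_of_lt he0, zero_add]
      exact sum_range_mul_pow_div_pow_mod (fun i hi => he (i + 1) (by omega)) (by omega)

end Nat

section DigitExpansion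

variable {R : Type*} [Semiring R]

theorem exists_add_of_digitwise {b N : ℕ} (hb : 0 < b) {f v : ℕ → R} {w : Fin N → R}
    (hv : ∀ n < b ^ N, v n = ∑ i : Fin N, f (n / b ^ (i : ℕ) % b) * w i)
    (hf : ∀ x < b, ∀ y < b, ∃ z < b, f z = f x + f y) {n m : ℕ}
    (hn : n < b ^ N) (hm : m < b ^ N) : ∃ k < b ^ N, v k = v n + v m := by
  choose g hgb hg using hf
  let z : ℕ → ℕ := fun i =>
    g (n / b ^ i % b) (Nat.mod_lt _ hb) (m / b ^ i % b) (Nat.mod_lt _ hb)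
  have hz : ∀ i, z i < b := fun i => hgb ..
  have hk := Nat.sum_range_mul_pow_lt (N := N) fun i _ => hz i
  refine ⟨_, hk, ?_⟩
  rw [hv _ hk, hv n hn, hv m hm, ← sum_add_distrib]
  refine sum_congr rfl fun i _ => ?_
  rw [Nat.sum_range_mul_pow_div_pow_mod (fun i _ => hz i) i.isLt, hg, add_mul]

theorem sum_range_digits_eq {b : ℕ} (hb : 0 < b) {f : ℕ → R} (hf : f 0 = 0) (w : ℕ → R)
    {n N M : ℕ} (hN : n < b ^ N) (hM : n < b ^ M) :
    ∑ i ∈ range N, f (n / b ^ i % b) * w i = ∑ i ∈ range M, f (n / b ^ i % b) * w i := by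
  wlog hNM : N ≤ M generalizing N M
  · exact (this hM hN (by omega)).symm
  refine sum_subset (range_subset_range.2 hNM) fun i _ hi => ?_
  have hni : n < b ^ i := hN.trans_le (Nat.pow_le_pow_right hb (by simpa using hi))
  rw [Nat.div_eq_of_lt hni, Nat.zero_mod, hf, zero_mul]

theorem exists_add_of_digit_expansion {b : ℕ} (hb : 2 ≤ b) {v w : ℕ → R} (hv0 : v 0 = 0)
    (hv : ∀ n, v n = ∑ i ∈ range (n + 1), v (n / b ^ i % b) * w i)
    (hdigit : ∀ x < b, ∀ y < b, ∃ z < b, v z = v x + v y) (n m : ℕ) :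
    ∃ k, v k = v n + v m := by
  have hexp : ∀ N, ∀ n < b ^ N, v n = ∑ i : Fin N, v (n / b ^ (i : ℕ) % b) * w i := by
    intro N n hn
    rw [Fin.sum_univ_eq_sum_range (fun i => v (n / b ^ i % b) * w i), hv n,
      sum_range_digits_eq (by omega) hv0 w (n.lt_succ_self.trans (Nat.lt_pow_self hb)) hn]
  have hlt : ∀ k ≤ n + m, k < b ^ (n + m) := fun k hk =>
    (Nat.lt_pow_self hb).trans_le (Nat.pow_le_pow_right (by omega) hk)
  obtain ⟨k, -, hk⟩ := exists_add_of_digitwise (by omega) (w := fun i => w i) (hexp (n + m))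
    hdigit (hlt n (by omega)) (hlt m (by omega))
  exact ⟨k, hk⟩

end DigitExpansion

theorem AddSubmonoid.neg_mem_of_charP {R : Type*} [Ring R] {p : ℕ} [CharP R p] (hp : p ≠ 0)
    (S : AddSubmonoid R) {x : R} (hx : x ∈ S) : -x ∈ S := by
  have hneg : -x = (p - 1) • x := by
    rw [nsmul_eq_mul, Nat.cast_pred (Nat.pos_of_ne_zero hp), CharP.cast_eq_zero, zero_sub,
      neg_one_mul]
  exact hneg ▸ S.nsmul_mem hx _

theorem standard_enumeration_add_general
    (K : Type*) [Field K]
    (p c q : ℕ) (hp : p.Prime) (hc : 0 < c) (hq : q = p ^ c)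
    [CharP K p]
    (𝔭 : K)
    (ε : Fin c → K)
    (u : ℕ → K)
    (ubase : ∀ m < q, u m = (∑ k : Fin c, ((m / p ^ (k : ℕ)) % p : ℕ) * ε k) * 𝔭⁻¹)
    (hdig : ∀ n : ℕ, u n = ∑ k ∈ Finset.range (n + 1),
      u (n / q ^ k % q) * 𝔭 ^ (-(k : ℤ)))
    (l : ℕ) :
    (Set.range fun k => u l + u k) = Set.range u := by
  have hq2 : 2 ≤ q := hq ▸ hp.two_le.trans (Nat.le_self_pow hc.ne' p)
  have hu0 : u 0 = 0 := by simp [ubase 0 (by omega)]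
  have hu_digit_add : ∀ x < q, ∀ y < q, ∃ z < q, u z = u x + u y := by
    subst hq
    intro x hx y hy
    refine exists_add_of_digitwise hp.pos (f := Nat.cast) (w := fun k => ε k * 𝔭⁻¹)
      (fun n hn => ?_) (fun a _ b _ => ?_) hx hy
    · simp only [ubase n hn, sum_mul, mul_assoc]
    · exact ⟨(a + b) % p, Nat.mod_lt _ hp.pos, by rw [← CharP.cast_eq_mod, Nat.cast_add]⟩
  let S : AddSubmonoid K :=
    { carrier := Set.range u
      add_mem' := by
        rintro _ _ ⟨n, rfl⟩ ⟨m, rfl⟩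
        exact exists_add_of_digit_expansion hq2 hu0 hdig hu_digit_add n m
      zero_mem' := ⟨0, hu0⟩ }
  ext x
  constructor
  · rintro ⟨k, rfl⟩
    exact S.add_mem ⟨l, rfl⟩ ⟨k, rfl⟩
  · intro hx
    obtain ⟨k, hk⟩ : x + -u l ∈ S := S.add_mem hx (S.neg_mem_of_charP hp.ne_zero ⟨l, rfl⟩)
    exact ⟨k, show u l + u k = x by rw [hk]; abel⟩

/-- For the standard digit-wise enumeration `u : ℕ → K` of coset representatives of
`O` in `K⁺` over a local field `K` of characteristic `p`, for each fixed `l ∈ ℕ` the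
map `k ↦ u l + u k` permutes the set `{u k : k ∈ ℕ}`:
`{u l + u k : k ∈ ℕ} = {u k : k ∈ ℕ}`. -/
theorem standard_enumeration_add
    (K : Type*) [Field K]
    (p c q : ℕ) (hp : p.Prime) (hc : 0 < c) (hq : q = p ^ c)
    [CharP K p]
    (𝔭 : K) (h𝔭 : 𝔭 ≠ 0)
    (ε : Fin c → K)
    (u : ℕ → K)
    (ubase : ∀ m < q, u m = (∑ k : Fin c, ((m / p ^ (k : ℕ)) % p : ℕ) * ε k) * 𝔭⁻¹)
    (hdig : ∀ n : ℕ, u n = ∑ k ∈ Finset.range (n + 1),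
      u (n / q ^ k % q) * 𝔭 ^ (-(k : ℤ)))
    (l : ℕ) :
    (Set.range fun k => u l + u k) = Set.range u :=
  standard_enumeration_add_general K p c q hp hc hq 𝔭 ε u ubase hdig l
end

section
/- The union W = ∪_{i=1}^{q−1} (O + u(i)) is a multiwavelet set of order q−1 in K: {𝔭^j W : j ∈ ℤ} is a measurable partition of K, and for each 1 ≤ i ≤ q−1, {O + u(i) + u(k) : k ∈ ℕ₀} is a measurable partition of K. In particular |W| = q − 1 and every ξ ∈ W satisfies |ξ| = q. -/
/-!
Write `O = {v ≤ 1}`. By the ultrametric inequality every coset `O + u i` with `1 ≤ i < q` lies on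
the sphere `v = q`. Conversely, a point of the shell `1 < v ≤ q` shares its absolute value with
its representative `u n`, and `n < q` because the ball `{v ≤ q} = 𝔭⁻¹ O` has measure `q`, so it
contains at most `q` disjoint translates of `O`. Thus `W` is the shell `v⁻¹ (1, q]`; its dilates
by `𝔭 ^ j` are the shells `v⁻¹ (q ^ (-j), q ^ (1 - j)]`, which partition `K ∖ {0}`, and `{0}` is
null. Since the `u k` are closed under addition, translation by `u i` permutes the cosets of `O`.

The translates of `O` need not be measurable; since `μ` is invariant under translation of
arbitrary sets, they still split every set additively, as `O` does.
-/

open MeasureTheory Set Function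

def AbsoluteValue.ofIsNonarchimedean {R S : Type*} [Semiring R] [Semiring S] [LinearOrder S]
    [IsStrictOrderedRing S] (f : R → S) (eq_zero : ∀ x, f x = 0 ↔ x = 0)
    (map_mul : ∀ x y, f (x * y) = f x * f y) (hna : IsNonarchimedean f) (nonneg : ∀ x, 0 ≤ f x) :
    AbsoluteValue R S where
  toFun := f
  map_mul' := map_mul
  nonneg' := nonneg
  eq_zero' := eq_zero
  add_le' _ _ := hna.add_le nonneg

section CosetRepresentatives

variable {G ι : Type*} [AddCommGroup G] {O : Set G} {u : ι → G}

theorem pairwise_disjoint_image_add_of_existsUnique (hu : ∀ x, ∃! n, x - u n ∈ O) :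
    Pairwise (Disjoint on fun n => (· + u n) '' O) := by
  intro m n hmn
  refine Set.disjoint_left.2 ?_
  rintro _ ⟨x, hx, rfl⟩ ⟨y, hy, hyx⟩
  exact hmn ((hu (x + u m)).unique (by simpa using hx) (by simpa [← hyx] using hy))

theorem iUnion_image_add_eq_univ_of_exists (hu : ∀ x, ∃ n, x - u n ∈ O) :
    ⋃ n, (· + u n) '' O = univ :=
  eq_univ_of_forall fun x =>
    let ⟨n, hn⟩ := hu x
    mem_iUnion.2 ⟨n, x - u n, hn, sub_add_cancel x (u n)⟩

theorem injective_of_existsUnique_sub_mem (h0 : (0 : G) ∈ O) (hu : ∀ x, ∃! n, x - u n ∈ O) :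
    Injective u :=
  fun m n h => (hu (u m)).unique (by simpa using h0) (by simpa [h] using h0)

theorem exists_add_eq_of_existsUnique_sub_mem (h0 : (0 : G) ∈ O) (hu : ∀ x, ∃! n, x - u n ∈ O)
    (hadd : ∀ l k, ∃ m, u l + u k = u m) (i n : ι) : ∃ k, u i + u k = u n := by
  obtain ⟨k, hk, -⟩ := hu (u n - u i)
  obtain ⟨m, hm⟩ := hadd i k
  refine ⟨k, hm.trans (congrArg u ((hu (u n)).unique ?_ (by simpa using h0)))⟩
  rwa [← hm, ← sub_sub]

theorem existsUnique_sub_mem_image_add (h0 : (0 : G) ∈ O) (hu : ∀ x, ∃! n, x - u n ∈ O)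
    (hadd : ∀ l k, ∃ m, u l + u k = u m) (i : ι) (x : G) :
    ∃! k, x - u k ∈ (· + u i) '' O := by
  simp only [image_add_right, mem_preimage, ← sub_eq_add_neg, sub_sub]
  obtain ⟨n, hn, -⟩ := hu x
  obtain ⟨k, hk⟩ := exists_add_eq_of_existsUnique_sub_mem h0 hu hadd i n
  refine ⟨k, show x - (u k + u i) ∈ O by rwa [add_comm, hk], fun k' hk' => ?_⟩
  obtain ⟨m, hm⟩ := hadd i k'
  obtain rfl : m = n := (hu x).unique (by rwa [← hm, add_comm]) hn
  exact injective_of_existsUnique_sub_mem h0 hu (add_left_cancel (hm.trans hk.symm))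

end CosetRepresentatives

section TranslationInvariantMeasure

variable {G ι : Type*} [AddCommGroup G] [MeasurableSpace G] {μ : Measure G} {O : Set G}

theorem measure_inter_add_sdiff_image_add (htrans : ∀ a s, μ ((· + a) '' s) = μ s)
    (hO : MeasurableSet O) (a : G) (A : Set G) :
    μ (A ∩ (· + a) '' O) + μ (A \ (· + a) '' O) = μ A := by
  obtain ⟨B, rfl⟩ := image_surjective.2 (add_right_surjective a) A
  rw [← image_inter (add_left_injective a), ← image_sdiff (add_left_injective a), htrans,
    htrans, htrans, measure_inter_add_sdiff B hO]

theorem measure_biUnion_finset_image_add (htrans : ∀ a s, μ ((· + a) '' s) = μ s)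
    (hO : MeasurableSet O) {u : ι → G} (hdisj : Pairwise (Disjoint on fun n => (· + u n) '' O))
    (F : Finset ι) : μ (⋃ i ∈ F, (· + u i) '' O) = F.card * μ O := by
  classical
  induction F using Finset.induction_on with
  | empty => simp
  | insert a F ha ih =>
    have hdisj_a : Disjoint ((· + u a) '' O) (⋃ i ∈ F, (· + u i) '' O) :=
      disjoint_iUnion₂_right.2 fun i hi => hdisj (ne_of_mem_of_not_mem hi ha).symm
    rw [Finset.set_biUnion_insert, ← measure_inter_add_sdiff_image_add htrans hO (u a),
      union_inter_cancel_left, union_sdiff_cancel_left hdisj_a.inter_eq.subset, htrans, ih,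
      Finset.card_insert_of_notMem ha, Nat.cast_add_one, add_one_mul, add_comm]

end TranslationInvariantMeasure

theorem measure_singleton_zero_eq_zero_of_image_mul {M : Type*} [MulZeroClass M]
    [MeasurableSpace M] {μ : Measure M} {a : M} {c : ENNReal} (hc : c ≠ 1) (hfin : μ {0} ≠ ⊤)
    (hscale : μ ((a * ·) '' {0}) = c * μ {0}) : μ {0} = 0 := by
  rw [image_singleton, mul_zero] at hscale
  by_contra hne
  exact hc ((ENNReal.mul_eq_left hne hfin).1 (by rw [mul_comm, ← hscale]))

theorem pairwise_disjoint_Ioc_zpow₀ {𝕜 : Type*} [Semifield 𝕜] [LinearOrder 𝕜]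
    [IsStrictOrderedRing 𝕜] {b : 𝕜} (hb : 1 < b) :
    Pairwise (Disjoint on fun n : ℤ => Ioc (b ^ n) (b ^ (n + 1))) := by
  intro m n hmn
  refine Set.disjoint_left.2 fun x ⟨hm₁, hm₂⟩ ⟨hn₁, hn₂⟩ => hmn ?_
  have := (zpow_lt_zpow_iff_right₀ hb).1 (hm₁.trans_le hn₂)
  have := (zpow_lt_zpow_iff_right₀ hb).1 (hn₁.trans_le hm₂)
  omega

namespace AbsoluteValue

variable {K : Type*} [Field K] (v : AbsoluteValue K ℝ)

theorem image_mul_preimage {π : K} (hπ : π ≠ 0) (s : Set ℝ) :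
    (π * ·) '' (v ⁻¹' s) = v ⁻¹' ((v π * ·) '' s) := by
  ext y
  simp only [mem_image, mem_preimage]
  constructor
  · rintro ⟨x, hx, rfl⟩
    exact ⟨v x, hx, (map_mul v π x).symm⟩
  · rintro ⟨t, ht, hty⟩
    refine ⟨π⁻¹ * y, ?_, mul_inv_cancel_left₀ hπ y⟩
    rwa [map_mul, map_inv₀, ← hty, inv_mul_cancel_left₀ (v.ne_zero_iff.2 hπ)]

section Dilations

variable {π : K} {q : ℝ}

theorem image_mul_closedBall (hq : 0 < q) (hπ : v π = q⁻¹) :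
    (π * ·) '' {x | v x ≤ q} = {x | v x ≤ 1} := by
  have hπ0 : π ≠ 0 := v.ne_zero_iff.1 (hπ ▸ inv_ne_zero hq.ne')
  have h := v.image_mul_preimage hπ0 (Iic q)
  rwa [hπ, image_mul_left_Iic (inv_pos.2 hq), inv_mul_cancel₀ hq.ne'] at h

theorem image_zpow_mul_preimage_Ioc (hq : 0 < q) (hπ : v π = q⁻¹) (j : ℤ) :
    (π ^ j * ·) '' (v ⁻¹' Ioc 1 q) = v ⁻¹' Ioc (q ^ (-j)) (q ^ (-j + 1)) := by
  have hπ0 : π ≠ 0 := v.ne_zero_iff.1 (hπ ▸ inv_ne_zero hq.ne')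
  rw [v.image_mul_preimage (zpow_ne_zero j hπ0), map_zpow₀, hπ, inv_zpow',
    image_mul_left_Ioc (zpow_pos hq _), mul_one, zpow_add_one₀ hq.ne']

theorem pairwise_disjoint_image_zpow_mul_preimage_Ioc (hq : 1 < q) (hπ : v π = q⁻¹) :
    Pairwise (Disjoint on fun j : ℤ => (π ^ j * ·) '' (v ⁻¹' Ioc 1 q)) := by
  intro i j hij
  simp only [onFun, v.image_zpow_mul_preimage_Ioc (zero_lt_one.trans hq) hπ]
  exact (pairwise_disjoint_Ioc_zpow₀ hq (neg_injective.ne hij)).preimage v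

theorem iUnion_image_zpow_mul_preimage_Ioc (hq : 1 < q) (hπ : v π = q⁻¹) :
    ⋃ j : ℤ, (π ^ j * ·) '' (v ⁻¹' Ioc 1 q) = {0}ᶜ := by
  ext x
  simp only [v.image_zpow_mul_preimage_Ioc (zero_lt_one.trans hq) hπ, mem_iUnion, mem_preimage,
    mem_compl_singleton_iff]
  constructor
  · rintro ⟨j, hj, -⟩
    exact v.pos_iff.1 ((zpow_pos (zero_lt_one.trans hq) _).trans hj)
  · intro hx
    obtain ⟨n, hn⟩ := exists_mem_Ioc_zpow (v.pos_iff.2 hx) hq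
    exact ⟨-n, by rwa [neg_neg]⟩

theorem apply_eq_of_mem_image_add (hna : IsNonarchimedean v) {c ξ : K} (hc : 1 < v c)
    (hξ : ξ ∈ (· + c) '' {x | v x ≤ 1}) : v ξ = v c := by
  obtain ⟨x, hx, rfl⟩ := hξ
  exact hna.add_eq_right_of_lt (lt_of_le_of_lt hx hc)

theorem measure_closedBall_eq [MeasurableSpace K] {μ : Measure K} {n : ℕ} (hn : 0 < n)
    (hπ : v π = (n : ℝ)⁻¹) (hscale : ∀ s, μ ((π * ·) '' s) = (n : ENNReal)⁻¹ * μ s)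
    (hO : μ {x | v x ≤ 1} = 1) : μ {x | v x ≤ n} = n := by
  have h := hscale {x | v x ≤ n}
  rw [v.image_mul_closedBall (by positivity) hπ, hO] at h
  rw [← one_mul (μ _), ← ENNReal.mul_inv_cancel (by positivity) (ENNReal.natCast_ne_top n),
    mul_assoc, ← h, mul_one]

end Dilations

section CosetsOfClosedUnitBall

variable {u : ℕ → K} {q : ℕ}

theorem apply_eq_of_mem_biUnion_Ico_image_add (hna : IsNonarchimedean v) (hq : 1 < q)
    (hunorm : ∀ n, 0 < n → n < q → v (u n) = q) {ξ : K}
    (hξ : ξ ∈ ⋃ i ∈ Finset.Ico 1 q, (· + u i) '' {x | v x ≤ 1}) : v ξ = q := by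
  obtain ⟨i, hi, hξ⟩ := mem_iUnion₂.1 hξ
  obtain ⟨hi₁, hi₂⟩ := Finset.mem_Ico.1 hi
  rw [v.apply_eq_of_mem_image_add hna (by rw [hunorm i hi₁ hi₂]; exact_mod_cast hq) hξ,
    hunorm i hi₁ hi₂]

theorem card_mul_measure_le_measure_closedBall [MeasurableSpace K] {μ : Measure K} {ι : Type*}
    {w : ι → K} (hna : IsNonarchimedean v) (htrans : ∀ a s, μ ((· + a) '' s) = μ s)
    (hmeas : MeasurableSet {x | v x ≤ 1})
    (hdisj : Pairwise (Disjoint on fun n => (· + w n) '' {x | v x ≤ 1}))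
    {r : ℝ} (hr : 1 ≤ r) {F : Finset ι} (hF : ∀ i ∈ F, v (w i) ≤ r) :
    F.card * μ {x | v x ≤ 1} ≤ μ {x | v x ≤ r} := by
  rw [← measure_biUnion_finset_image_add htrans hmeas hdisj]
  refine measure_mono (iUnion₂_subset fun i hi => ?_)
  rintro _ ⟨x, hx, rfl⟩
  exact (hna x (w i)).trans (sup_le (hx.trans hr) (hF i hi))

theorem index_lt_of_apply_le [MeasurableSpace K] {μ : Measure K} (hna : IsNonarchimedean v)
    (htrans : ∀ a s, μ ((· + a) '' s) = μ s) (hmeas : MeasurableSet {x | v x ≤ 1})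
    (hdisj : Pairwise (Disjoint on fun n => (· + u n) '' {x | v x ≤ 1}))
    (hO : μ {x | v x ≤ 1} = 1) (hball : μ {x | v x ≤ q} = q) (hq : 1 < q) (hu0 : u 0 = 0)
    (hunorm : ∀ n, 0 < n → n < q → v (u n) = q) {n : ℕ} (hn : v (u n) ≤ q) : n < q := by
  by_contra! hqn
  have hcard := v.card_mul_measure_le_measure_closedBall hna htrans hmeas hdisj
    (F := insert n (Finset.range q)) (r := q) (by exact_mod_cast hq.le) (by
      simp only [Finset.mem_insert, Finset.mem_range, forall_eq_or_imp]
      refine ⟨hn, fun i hi => ?_⟩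
      rcases i.eq_zero_or_pos with rfl | hi₀
      · simp [hu0]
      · exact (hunorm i hi₀ hi).le)
  rw [Finset.card_insert_of_notMem (by simpa using hqn), Finset.card_range, hO, mul_one,
    hball] at hcard
  have : q + 1 ≤ q := by exact_mod_cast hcard
  omega

theorem biUnion_Ico_image_add_eq_preimage_Ioc (hna : IsNonarchimedean v) (hq : 1 < q)
    (hu0 : u 0 = 0) (hunorm : ∀ n, 0 < n → n < q → v (u n) = q)
    (hu : ∀ x, ∃ n, x - u n ∈ {x | v x ≤ 1}) (hlt : ∀ n, v (u n) ≤ q → n < q) :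
    ⋃ i ∈ Finset.Ico 1 q, (· + u i) '' {x | v x ≤ 1} = v ⁻¹' Ioc 1 q := by
  refine Subset.antisymm (fun ξ hξ => ?_) fun x hx => ?_
  · rw [mem_preimage, v.apply_eq_of_mem_biUnion_Ico_image_add hna hq hunorm hξ]
    exact ⟨by exact_mod_cast hq, le_rfl⟩
  · obtain ⟨n, hn⟩ := hu x
    have hun : v (u n) = v x := by
      simpa using hna.add_eq_left_of_lt (x := x) (y := -(x - u n))
        (by rw [map_neg_eq_map]; exact lt_of_le_of_lt hn hx.1)
    have hn₀ : n ≠ 0 := by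
      rintro rfl
      linarith [hx.1, hun ▸ hu0 ▸ map_zero v]
    exact mem_iUnion₂.2 ⟨n, Finset.mem_Ico.2 ⟨Nat.one_le_iff_ne_zero.2 hn₀, hlt n (hun ▸ hx.2)⟩,
      x - u n, hn, sub_add_cancel x (u n)⟩

end CosetsOfClosedUnitBall

end AbsoluteValue

/-- The union `W = ∪_{i=1}^{q-1} (O + u i)` is a multiwavelet set of order `q - 1` in a
local field `K`: `{𝔭^j W : j ∈ ℤ}` is a measurable partition of `K`, and for each
`1 ≤ i ≤ q-1`, `{O + u i + u k : k ∈ ℕ}` is a measurable partition of `K`.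
In particular `|W| = q - 1` and every `ξ ∈ W` satisfies `v ξ = q`. -/
theorem shannon_multiwavelet_set
    (K : Type*) [Field K] [MeasurableSpace K]
    (v : K → ℝ)
    (hv0 : ∀ x : K, v x = 0 ↔ x = 0)
    (hvm : ∀ x y : K, v (x * y) = v x * v y)
    (hvu : ∀ x y : K, v (x + y) ≤ max (v x) (v y))
    (hvnn : ∀ x : K, 0 ≤ v x)
    (q : ℕ) (hq : 1 < q)
    (𝔭 : K) (h𝔭 : v 𝔭 = (q : ℝ)⁻¹)
    (O : Set K) (hOdef : O = {x : K | v x ≤ 1}) (hOmeas : MeasurableSet O)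
    (μ : Measure K)
    (htrans : ∀ (a : K) (s : Set K), μ ((a + ·) '' s) = μ s)
    (hscale : ∀ s : Set K, μ ((𝔭 * ·) '' s) = ((q : ENNReal))⁻¹ * μ s)
    (hO : μ O = 1)
    (u : ℕ → K) (hu0 : u 0 = 0)
    (hunorm : ∀ n, 0 < n → n < q → v (u n) = (q : ℝ))
    (hu : ∀ x : K, ∃! n : ℕ, x - u n ∈ O)
    (hadd : ∀ l k : ℕ, ∃ m : ℕ, u l + u k = u m) :
    -- `{𝔭^j W : j ∈ ℤ}` is a measurable partition of `K`
    ((Pairwise fun j j' : ℤ =>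
        μ (((𝔭 ^ j * ·) '' ⋃ i ∈ Finset.Ico 1 q, (· + u i) '' O) ∩
           ((𝔭 ^ j' * ·) '' ⋃ i ∈ Finset.Ico 1 q, (· + u i) '' O)) = 0) ∧
      μ (Set.univ \ ⋃ j : ℤ, (𝔭 ^ j * ·) '' ⋃ i ∈ Finset.Ico 1 q, (· + u i) '' O) = 0) ∧
    -- for each `1 ≤ i ≤ q - 1`, `{O + u i + u k : k ∈ ℕ}` is a measurable partition of `K`
    (∀ i : ℕ, 1 ≤ i → i < q →
      (Pairwise fun k k' : ℕ =>
          μ (((· + u k) '' ((· + u i) '' O)) ∩ ((· + u k') '' ((· + u i) '' O))) = 0) ∧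
        μ (Set.univ \ ⋃ k : ℕ, (· + u k) '' ((· + u i) '' O)) = 0) ∧
    -- `|W| = q - 1`
    μ (⋃ i ∈ Finset.Ico 1 q, (· + u i) '' O) = (q : ENNReal) - 1 ∧
    -- every `ξ ∈ W` has `v ξ = q`
    ∀ ξ ∈ ⋃ i ∈ Finset.Ico 1 q, (· + u i) '' O, v ξ = (q : ℝ) := by
  obtain ⟨v, rfl⟩ : ∃ w : AbsoluteValue K ℝ, ⇑w = v :=
    ⟨.ofIsNonarchimedean v hv0 hvm hvu hvnn, rfl⟩
  subst hOdef
  have htrans' : ∀ a s, μ ((· + a) '' s) = μ s := by simpa only [add_comm] using htrans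
  have hdisj := pairwise_disjoint_image_add_of_existsUnique hu
  have h0 : (0 : K) ∈ {x | v x ≤ 1} := by simp
  have hball := v.measure_closedBall_eq (by omega) h𝔭 hscale hO
  have hzero : μ {0} = 0 := measure_singleton_zero_eq_zero_of_image_mul (by simpa using hq.ne')
    (ne_top_of_le_ne_top (hO ▸ ENNReal.one_ne_top) (measure_mono (singleton_subset_iff.2 h0)))
    (hscale {0})
  have hW := v.biUnion_Ico_image_add_eq_preimage_Ioc hvu hq hu0 hunorm (fun x => (hu x).exists)
    fun n => v.index_lt_of_apply_le hvu htrans' hOmeas hdisj hO hball hq hu0 hunorm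
  have hq' : (1 : ℝ) < q := by exact_mod_cast hq
  refine ⟨⟨fun j j' h => ?_, ?_⟩, fun i _ _ => ?_, ?_, fun ξ hξ => ?_⟩
  · rw [hW]
    exact measure_mono_null (v.pairwise_disjoint_image_zpow_mul_preimage_Ioc hq' h𝔭 h).inter_eq.le
      measure_empty
  · rwa [hW, v.iUnion_image_zpow_mul_preimage_Ioc hq' h𝔭, ← compl_eq_univ_sdiff, compl_compl]
  · have hu' := existsUnique_sub_mem_image_add h0 hu hadd i
    refine ⟨fun k k' h => ?_, ?_⟩
    · exact measure_mono_null (pairwise_disjoint_image_add_of_existsUnique hu' h).inter_eq.le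
        measure_empty
    · rw [iUnion_image_add_eq_univ_of_exists fun x => (hu' x).exists, sdiff_self, measure_empty]
  · rw [measure_biUnion_finset_image_add htrans' hOmeas hdisj, hO, Nat.card_Ico, mul_one,
      ENNReal.natCast_sub, Nat.cast_one]
  · exact v.apply_eq_of_mem_biUnion_Ico_image_add hvu hq hunorm hξ
end
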